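/- Let K = K_R(R) be a proper cone, let r̃ ∈ int(K) and h̃ ∈ int(K*), and suppose à and w > 0 satisfy: W := à − w·r̃h̃ᵀ maps the columns of R⁽ᵏ⁾ into K_R(R⁽ᵏ⁺¹⁾) where R⁽ᵏ⁺¹⁾ = [R⁽ᵏ⁾, W R⁽ᵏ⁾], every column of R⁽ᵏ⁾ lies in K, h̃ᵀ R⁽ᵏ⁾ > 0 entrywise, and r̃ = R⁽ᵏ⁺¹⁾ p̃ for some entrywise strictly positive vector p̃. Then à R⁽ᵏ⁾ = R⁽ᵏ⁺¹⁾ P for some entrywise strictly positive matrix P. -/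

import Mathlib

open Matrix

/-- The conical hull of the columns of a matrix (R-representation),
over an arbitrary finite column index type. -/
def coneOf {n : ℕ} {κ : Type*} [Fintype κ] (R : Matrix (Fin n) κ ℝ) :
    Set (Fin n → ℝ) :=
  {x | ∃ p : κ → ℝ, (∀ j, 0 ≤ p j) ∧ x = R *ᵥ p}

/-- The dual cone. -/
def dualCone {n : ℕ} (K : Set (Fin n → ℝ)) : Set (Fin n → ℝ) :=
  {h | ∀ r ∈ K, 0 ≤ h ⬝ᵥ r}

/-- A proper cone: closed convex cone with nonempty interior, pointed. -/
def IsProperCone {n : ℕ} (K : Set (Fin n → ℝ)) : Prop :=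
  ((∀ x ∈ K, ∀ y ∈ K, x + y ∈ K) ∧ (∀ x ∈ K, ∀ c : ℝ, 0 ≤ c → c • x ∈ K)) ∧
  IsClosed K ∧ (interior K).Nonempty ∧ ∀ x ∈ K, -x ∈ K → x = 0

/-!
Write `Ã = W + w r̃ h̃ᵀ`. Both summands applied to `R⁽ᵏ⁾` factor through `R⁽ᵏ⁺¹⁾`:
`W R⁽ᵏ⁾ = R⁽ᵏ⁺¹⁾ P̄` by hypothesis, and `r̃ (h̃ᵀ R⁽ᵏ⁾) = R⁽ᵏ⁺¹⁾ p̃ (h̃ᵀ R⁽ᵏ⁾)` since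
`r̃ = R⁽ᵏ⁺¹⁾ p̃`. Hence `Ã R⁽ᵏ⁾ = R⁽ᵏ⁺¹⁾ (P̄ + w p̃ (h̃ᵀ R⁽ᵏ⁾))`, and the rank-one term is
entrywise positive because `p̃ > 0` and `h̃ᵀ R⁽ᵏ⁾ > 0`, while `P̄ ≥ 0`.
-/

namespace Matrix

variable {l m n o α : Type*}

theorem add_smul_vecMulVec_mul_of_mul_eq [CommSemiring α] [Fintype m] [Fintype o]
    {W : Matrix l m α} {B : Matrix m n α} {C : Matrix l o α} {Pbar : Matrix o n α} (hWB : W * B = C * Pbar)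
    (w : α) (p : o → α) (h : m → α) :
    (W + w • vecMulVec (C *ᵥ p) h) * B = C * (Pbar + w • vecMulVec p (h ᵥ* B)) := by
  rw [Matrix.add_mul, hWB, Matrix.smul_mul, vecMulVec_mul, Matrix.mul_add, Matrix.mul_smul,
    mul_vecMulVec]

theorem add_smul_vecMulVec_pos [CommSemiring α] [PartialOrder α] [IsStrictOrderedRing α]
    {Pbar : Matrix o n α} (hPbar : ∀ i j, 0 ≤ Pbar i j) {w : α} (hw : 0 < w) {p : o → α}
    (hp : ∀ i, 0 < p i) {v : n → α} (hv : ∀ j, 0 < v j) (i : o) (j : n) :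
    0 < (Pbar + w • vecMulVec p v) i j :=
  add_pos_of_nonneg_of_pos (hPbar i j) (mul_pos hw (mul_pos (hp i) (hv j)))

end Matrix

theorem stmt13_general {n m : ℕ}
    (rt ht : Fin n → ℝ)
    (At : Matrix (Fin n) (Fin n) ℝ) (w : ℝ) (hw : 0 < w)
    (Rk : Matrix (Fin n) (Fin m) ℝ)
    (W : Matrix (Fin n) (Fin n) ℝ) (hW : W = At - w • Matrix.vecMulVec rt ht)
    (Rk1 : Matrix (Fin n) (Fin m ⊕ Fin m) ℝ)
    (hPbar : ∃ Pbar : Matrix (Fin m ⊕ Fin m) (Fin m) ℝ,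
      (∀ i j, 0 ≤ Pbar i j) ∧ W * Rk = Rk1 * Pbar)
    (hhtRk : ∀ j : Fin m, 0 < ht ⬝ᵥ (fun i => Rk i j))
    (pt : Fin m ⊕ Fin m → ℝ) (hpt : ∀ i, 0 < pt i) (hrteq : rt = Rk1 *ᵥ pt) :
    ∃ P : Matrix (Fin m ⊕ Fin m) (Fin m) ℝ,
      (∀ i j, 0 < P i j) ∧ At * Rk = Rk1 * P := by
  obtain ⟨Pbar, hPbar_nonneg, hWRk⟩ := hPbar
  have hAt : At = W + w • vecMulVec (Rk1 *ᵥ pt) ht := by rw [← hrteq, hW, sub_add_cancel]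
  refine ⟨Pbar + w • vecMulVec pt (ht ᵥ* Rk),
    add_smul_vecMulVec_pos hPbar_nonneg hw hpt hhtRk, ?_⟩
  rw [hAt, add_smul_vecMulVec_mul_of_mul_eq hWRk]

/-- The widening argument: with W = Ã - w r̃h̃ᵀ and R⁽ᵏ⁺¹⁾ = [R⁽ᵏ⁾, W R⁽ᵏ⁾], if
W R⁽ᵏ⁾ = R⁽ᵏ⁺¹⁾P̄ with P̄ ≥ 0, the columns of R⁽ᵏ⁾ lie in K, h̃ᵀR⁽ᵏ⁾ > 0
entrywise, and r̃ = R⁽ᵏ⁺¹⁾p̃ with p̃ > 0, then Ã R⁽ᵏ⁾ = R⁽ᵏ⁺¹⁾P with P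
entrywise strictly positive. -/
theorem stmt13 {n m q : ℕ} (R : Matrix (Fin n) (Fin q) ℝ)
    (hproper : IsProperCone (coneOf R))
    (rt ht : Fin n → ℝ)
    (hrt : rt ∈ interior (coneOf R)) (hht : ht ∈ interior (dualCone (coneOf R)))
    (At : Matrix (Fin n) (Fin n) ℝ) (w : ℝ) (hw : 0 < w)
    (Rk : Matrix (Fin n) (Fin m) ℝ)
    (W : Matrix (Fin n) (Fin n) ℝ) (hW : W = At - w • Matrix.vecMulVec rt ht)
    (Rk1 : Matrix (Fin n) (Fin m ⊕ Fin m) ℝ)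
    (hRk1 : Rk1 = Matrix.fromCols Rk (W * Rk))
    (hPbar : ∃ Pbar : Matrix (Fin m ⊕ Fin m) (Fin m) ℝ,
      (∀ i j, 0 ≤ Pbar i j) ∧ W * Rk = Rk1 * Pbar)
    (hcols : ∀ j : Fin m, (fun i => Rk i j) ∈ coneOf R)
    (hhtRk : ∀ j : Fin m, 0 < ht ⬝ᵥ (fun i => Rk i j))
    (pt : Fin m ⊕ Fin m → ℝ) (hpt : ∀ i, 0 < pt i) (hrteq : rt = Rk1 *ᵥ pt) :
    ∃ P : Matrix (Fin m ⊕ Fin m) (Fin m) ℝ,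
      (∀ i j, 0 < P i j) ∧ At * Rk = Rk1 * P :=
  stmt13_general rt ht At w hw Rk W hW Rk1 hPbar hhtRk pt hpt hrteq
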